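/- arXiv:1504.02118 — 5 statements merged into one kernel-verified Lean document; each statement's English description precedes it below -/
import Mathlib

section
/- If V_s is an n×n Vandermonde matrix with some knot of absolute value s_+ > 1, then its condition number satisfies κ(V_s) ≥ s_+^{n-1}/√n. In particular κ(V_s) grows exponentially in n if s_+ ≥ ν for a fixed ν > 1. -/
open Matrix Complex BigOperators Finset

noncomputable def specNorm {m n : ℕ} (A : Matrix (Fin m) (Fin n) ℂ) : ℝ :=
  ‖LinearMap.toContinuousLinearMap (Matrix.toEuclideanLin A)‖

noncomputable def condNum {n : ℕ} (A : Matrix (Fin n) (Fin n) ℂ) : ℝ :=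
  specNorm A * specNorm A⁻¹

noncomputable def singularValue {m n : ℕ} (j : ℕ) (A : Matrix (Fin m) (Fin n) ℂ) : ℝ :=
  ⨅ N : {N : Matrix (Fin m) (Fin n) ℂ // N.rank < j}, specNorm (A - N.1)

/-!
The largest knot `s i₀` enters the last column of `V` as the entry `s i₀ ^ (n - 1)`, and every
entry of a matrix is bounded by its spectral norm, so `‖V‖ ≥ s₊ ^ (n - 1)`. The first column of
`V` is the all-ones vector `𝟙` of Euclidean norm `√n`, and `V⁻¹ 𝟙 = e₀` is a unit vector, so
`‖V⁻¹‖ ≥ 1 / √n`.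
-/

section SpecNorm

variable {m n : ℕ}

lemma specNorm_nonneg (A : Matrix (Fin m) (Fin n) ℂ) : 0 ≤ specNorm A :=
  norm_nonneg _

lemma norm_toEuclideanLin_le (A : Matrix (Fin m) (Fin n) ℂ) (x : EuclideanSpace ℂ (Fin n)) :
    ‖toEuclideanLin A x‖ ≤ specNorm A * ‖x‖ :=
  (LinearMap.toContinuousLinearMap (toEuclideanLin A)).le_opNorm x

lemma toEuclideanLin_single_one (A : Matrix (Fin m) (Fin n) ℂ) (j : Fin n) :
    toEuclideanLin A (EuclideanSpace.single j 1) = WithLp.toLp 2 (A.col j) := by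
  ext i
  simp [Matrix.toLpLin_apply, Matrix.mulVec_single]

lemma norm_entry_le_specNorm (A : Matrix (Fin m) (Fin n) ℂ) (i : Fin m) (j : Fin n) :
    ‖A i j‖ ≤ specNorm A :=
  calc ‖A i j‖ = ‖toEuclideanLin A (EuclideanSpace.single j 1) i‖ := by
        rw [toEuclideanLin_single_one]; rfl
    _ ≤ ‖toEuclideanLin A (EuclideanSpace.single j 1)‖ := PiLp.norm_apply_le _ i
    _ ≤ specNorm A := by
        simpa using norm_toEuclideanLin_le A (EuclideanSpace.single j 1)

lemma norm_le_specNorm_inv_mul {A : Matrix (Fin n) (Fin n) ℂ} (hA : IsUnit A.det)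
    (x : EuclideanSpace ℂ (Fin n)) : ‖x‖ ≤ specNorm A⁻¹ * ‖toEuclideanLin A x‖ := by
  have hx : toEuclideanLin A⁻¹ (toEuclideanLin A x) = x := by
    simp [Matrix.toLpLin_apply, Matrix.mulVec_mulVec, Matrix.nonsing_inv_mul A hA]
  simpa only [hx] using norm_toEuclideanLin_le A⁻¹ (toEuclideanLin A x)

end SpecNorm

section Vandermonde

variable {n : ℕ}

lemma norm_pow_le_specNorm_vandermonde (s : Fin n → ℂ) (i : Fin n) :
    ‖s i‖ ^ (n - 1) ≤ specNorm (vandermonde s) := by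
  simpa [Matrix.vandermonde_apply] using
    norm_entry_le_specNorm (vandermonde s) i ⟨n - 1, Nat.sub_one_lt_of_lt i.isLt⟩

lemma inv_sqrt_le_specNorm_vandermonde_inv (hn : 0 < n) {s : Fin n → ℂ}
    (hdet : (vandermonde s).det ≠ 0) : 1 / Real.sqrt n ≤ specNorm (vandermonde s)⁻¹ := by
  have hones : ‖toEuclideanLin (vandermonde s) (EuclideanSpace.single ⟨0, hn⟩ 1)‖
      = Real.sqrt n := by
    rw [toEuclideanLin_single_one, EuclideanSpace.norm_eq]
    simp [Matrix.vandermonde_apply]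
  have hunit := norm_le_specNorm_inv_mul hdet.isUnit (EuclideanSpace.single ⟨0, hn⟩ (1 : ℂ))
  rw [hones, PiLp.norm_single, norm_one] at hunit
  rwa [div_le_iff₀ (Real.sqrt_pos.mpr (by exact_mod_cast hn))]

end Vandermonde

theorem vandermonde_cond_lower_large_knot_general (n : ℕ) (hn : 0 < n) (s : Fin n → ℂ)
    (hdet : (Matrix.vandermonde s).det ≠ 0) :
    condNum (Matrix.vandermonde s) ≥
      (⨆ i : Fin n, ‖s i‖) ^ (n - 1) / Real.sqrt n := by
  have : Nonempty (Fin n) := ⟨⟨0, hn⟩⟩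
  obtain ⟨i₀, hi₀⟩ := exists_eq_ciSup_of_finite (f := fun i => ‖s i‖)
  rw [← hi₀, div_eq_mul_one_div]
  exact mul_le_mul (norm_pow_le_specNorm_vandermonde s i₀)
    (inv_sqrt_le_specNorm_vandermonde_inv hn hdet) (by positivity) (specNorm_nonneg _)

/-- If s_+ = max_i |s_i| > 1 then κ(V_s) ≥ s_+^{n-1}/√n. -/
theorem vandermonde_cond_lower_large_knot (n : ℕ) (hn : 0 < n) (s : Fin n → ℂ)
    (hdet : (Matrix.vandermonde s).det ≠ 0)
    (hplus : 1 < ⨆ i : Fin n, ‖s i‖) :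
    condNum (Matrix.vandermonde s) ≥
      (⨆ i : Fin n, ‖s i‖) ^ (n - 1) / Real.sqrt n :=
  vandermonde_cond_lower_large_knot_general n hn s hdet
end

section
/- If 1/|s_i| ≥ ν > 1 for the first k knots s_0,…,s_{k-1} of an n×n Vandermonde matrix V_s (with k ≤ n), then σ_n(V_s) ≤ ν^{1−k}·√k·max{k, ν/(ν−1)}. -/
/-!
Zeroing the entries `s i ^ j` with `i < k` and `k - 1 ≤ j` leaves a matrix whose first `k` rows
lie in a `(k - 1)`-dimensional coordinate subspace, so it has rank `< n`; hence `σ_n` is at most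
the spectral norm of the removed part `vandermondeTail s k`. We bound that by its Frobenius norm:
each of its `k` nonzero rows is a geometric tail with ratio `‖s i‖² ≤ ν⁻²`, of squared norm at most
`ν^(2(1-k)) / (1 - ν⁻²) ≤ (ν^(1-k) · ν / (ν - 1))²`.
-/

open Matrix Complex BigOperators Finset

namespace Matrix

variable {m n R : Type*} [Fintype n] [Field R]

theorem rank_add_le (A B : Matrix m n R) : (A + B).rank ≤ A.rank + B.rank := by
  rw [rank, rank, rank, mulVecLin_add]
  exact (Submodule.finrank_mono (LinearMap.range_add_le _ _)).trans
    (Submodule.finrank_add_le_finrank_add_finrank _ _)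

theorem rank_le_card_add_card_compl_of_eq_zero [Fintype m] [DecidableEq m] (A : Matrix m n R)
    (I : Finset m) (J : Finset n) (h : ∀ i ∈ I, ∀ j ∉ J, A i j = 0) : A.rank ≤ #J + #Iᶜ := by
  let A₁ : Matrix m n R := of fun i j => if i ∈ I then A i j else 0
  let A₂ : Matrix m n R := of fun i j => if i ∈ I then 0 else A i j
  have hA : A = A₁ + A₂ := by
    ext i j
    by_cases hi : i ∈ I <;> simp [A₁, A₂, hi]
  have h₁ : A₁.rank ≤ #J := by
    rw [← rank_transpose]
    refine rank_le_card_of_support_subset _ _ (Function.support_subset_iff'.2 fun j hj => ?_)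
    ext i
    by_cases hi : i ∈ I
    · simp [A₁, hi, h i hi j hj]
    · simp [A₁, hi]
  have h₂ : A₂.rank ≤ #Iᶜ :=
    rank_le_card_of_support_subset _ _ (Function.support_subset_iff'.2 fun i hi => by
      ext j
      simp [A₂, Finset.notMem_compl.1 hi])
  rw [hA]
  exact (rank_add_le A₁ A₂).trans (add_le_add h₁ h₂)

end Matrix

section Frobenius

attribute [local instance] frobeniusSeminormedAddCommGroup

theorem specNorm_le_sqrt_sum_norm_sq {m n : ℕ} (A : Matrix (Fin m) (Fin n) ℂ) :
    specNorm A ≤ √(∑ i, ∑ j, ‖A i j‖ ^ 2) := by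
  have hA : ‖A‖ = √(∑ i, ∑ j, ‖A i j‖ ^ 2) := by
    rw [frobenius_norm_def, Real.sqrt_eq_rpow]
    norm_cast
  refine hA ▸ ContinuousLinearMap.opNorm_le_bound _ (norm_nonneg _) fun x => ?_
  calc ‖toEuclideanLin A x‖ = ‖replicateCol (Fin 1) (A *ᵥ x)‖ :=
        (frobenius_norm_replicateCol _).symm
    _ = ‖A * replicateCol (Fin 1) x‖ := by rw [replicateCol_mulVec]
    _ ≤ ‖A‖ * ‖replicateCol (Fin 1) x‖ := frobenius_norm_mul _ _
    _ = ‖A‖ * ‖x‖ := congrArg (‖A‖ * ·) (frobenius_norm_replicateCol _)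

end Frobenius

theorem singularValue_le_specNorm_sub {m n j : ℕ} (A N : Matrix (Fin m) (Fin n) ℂ)
    (hN : N.rank < j) : singularValue j A ≤ specNorm (A - N) :=
  ciInf_le ⟨0, by rintro _ ⟨N, rfl⟩; exact norm_nonneg _⟩
    (⟨N, hN⟩ : {N : Matrix (Fin m) (Fin n) ℂ // N.rank < j})

theorem Fin.sum_ite_pow_le_pow_div_one_sub {n a : ℕ} {x : ℝ} (hx₀ : 0 ≤ x) (hx₁ : x < 1) :
    ∑ j : Fin n, (if a ≤ (j : ℕ) then x ^ (j : ℕ) else 0) ≤ x ^ a / (1 - x) := by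
  rw [Fin.sum_univ_eq_sum_range (fun j => if a ≤ j then x ^ j else 0), ← sum_filter]
  have hIco : (range n).filter (a ≤ ·) = Ico a n := by
    ext j
    simp only [mem_filter, mem_range, mem_Ico]
    omega
  exact hIco ▸ geom_sum_Ico_le_of_lt_one hx₀ hx₁

def vandermondeTail {n : ℕ} (s : Fin n → ℂ) (k : ℕ) : Matrix (Fin n) (Fin n) ℂ :=
  of fun i j => if (i : ℕ) < k ∧ k - 1 ≤ (j : ℕ) then s i ^ (j : ℕ) else 0

theorem rank_vandermonde_sub_vandermondeTail_lt {n k : ℕ} (s : Fin n → ℂ) (hk : 1 ≤ k)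
    (hkn : k ≤ n) : (vandermonde s - vandermondeTail s k).rank < n := by
  have h := rank_le_card_add_card_compl_of_eq_zero (vandermonde s - vandermondeTail s k)
    {i | (i : ℕ) < k} {j | (j : ℕ) < k - 1} fun i hi j hj => by
      simp_all [vandermondeTail]
  rw [card_compl, Fin.card_filter_val_lt, Fin.card_filter_val_lt, Fintype.card_fin] at h
  omega

theorem sum_sum_norm_sq_vandermondeTail_le {n k : ℕ} (s : Fin n → ℂ) {ρ : ℝ} (hρ : ρ < 1)
    (hs : ∀ i : Fin n, (i : ℕ) < k → ‖s i‖ ≤ ρ) :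
    ∑ i, ∑ j, ‖vandermondeTail s k i j‖ ^ 2 ≤ k * (ρ ^ (k - 1) / (1 - ρ)) ^ 2 := by
  have hrow : ∀ i : Fin n, (i : ℕ) < k →
      ∑ j, ‖vandermondeTail s k i j‖ ^ 2 ≤ (ρ ^ (k - 1) / (1 - ρ)) ^ 2 := by
    intro i hi
    have hρ₀ : 0 ≤ ρ := (norm_nonneg _).trans (hs i hi)
    calc ∑ j, ‖vandermondeTail s k i j‖ ^ 2
        ≤ ∑ j : Fin n, (if k - 1 ≤ (j : ℕ) then (ρ ^ 2) ^ (j : ℕ) else 0) := by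
          gcongr with j
          split_ifs with hj
          · simp only [vandermondeTail, of_apply, hi, hj, and_self, if_true, norm_pow]
            rw [← pow_mul, ← pow_mul, mul_comm]
            gcongr
            exact hs i hi
          · rw [vandermondeTail, of_apply, if_neg fun h => hj h.2, norm_zero, sq, mul_zero]
      _ ≤ (ρ ^ 2) ^ (k - 1) / (1 - ρ ^ 2) :=
          Fin.sum_ite_pow_le_pow_div_one_sub (by positivity) (by nlinarith)
      _ ≤ (ρ ^ (k - 1) / (1 - ρ)) ^ 2 := by
          rw [div_pow, ← pow_mul, mul_comm, pow_mul]
          gcongr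
          nlinarith
  calc ∑ i, ∑ j, ‖vandermondeTail s k i j‖ ^ 2
      = ∑ i ∈ univ.filter (fun i : Fin n => (i : ℕ) < k), ∑ j, ‖vandermondeTail s k i j‖ ^ 2 := by
        refine (sum_filter_of_ne fun i _ hne => ?_).symm
        by_contra hi
        exact hne (by simp [vandermondeTail, hi])
    _ ≤ ∑ i ∈ univ.filter (fun i : Fin n => (i : ℕ) < k), (ρ ^ (k - 1) / (1 - ρ)) ^ 2 :=
        sum_le_sum fun i hi => hrow i (mem_filter.1 hi).2
    _ ≤ k * (ρ ^ (k - 1) / (1 - ρ)) ^ 2 := by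
        rw [sum_const, Fin.card_filter_val_lt, nsmul_eq_mul]
        gcongr
        exact_mod_cast min_le_right n k

/-- If 1/|s_i| ≥ ν > 1 for the first k knots, then
σ_n(V_s) ≤ ν^{1−k}·√k·max{k, ν/(ν−1)}. -/
theorem vandermonde_smallest_sv_small_knots (n k : ℕ) (hk : 1 ≤ k) (hkn : k ≤ n)
    (s : Fin n → ℂ) (ν : ℝ) (hν : 1 < ν)
    (hsmall : ∀ i : Fin n, (i : ℕ) < k → ν ≤ 1 / ‖s i‖) :
    singularValue n (Matrix.vandermonde s) ≤
      ν ^ ((1 : ℤ) - (k : ℤ)) * Real.sqrt k * max (k : ℝ) (ν / (ν - 1)) := by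
  have hν₀ : 0 < ν := by linarith
  have hs : ∀ i : Fin n, (i : ℕ) < k → ‖s i‖ ≤ ν⁻¹ := fun i hi => by
    rcases (norm_nonneg (s i)).eq_or_lt with h0 | hpos
    · exact h0 ▸ inv_nonneg.2 hν₀.le
    · exact (le_inv_comm₀ hpos hν₀).2 (one_div ‖s i‖ ▸ hsmall i hi)
  calc singularValue n (vandermonde s)
      ≤ specNorm (vandermondeTail s k) := by
        simpa using singularValue_le_specNorm_sub (vandermonde s) _
          (rank_vandermonde_sub_vandermondeTail_lt s hk hkn)
    _ ≤ √(∑ i, ∑ j, ‖vandermondeTail s k i j‖ ^ 2) := specNorm_le_sqrt_sum_norm_sq _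
    _ ≤ √(k * (ν⁻¹ ^ (k - 1) / (1 - ν⁻¹)) ^ 2) :=
        Real.sqrt_le_sqrt (sum_sum_norm_sq_vandermondeTail_le s (inv_lt_one_of_one_lt₀ hν) hs)
    _ = ν ^ ((1 : ℤ) - k) * √k * (ν / (ν - 1)) := by
        have hν₁ : 0 < ν - 1 := by linarith
        have hρ : 0 ≤ 1 - ν⁻¹ := sub_nonneg.2 (inv_le_one_of_one_le₀ hν.le)
        rw [Real.sqrt_mul (Nat.cast_nonneg k), Real.sqrt_sq (by positivity),
          show (1 : ℤ) - k = -((k - 1 : ℕ) : ℤ) by omega, _root_.zpow_neg, zpow_natCast, inv_pow]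
        field_simp
    _ ≤ ν ^ ((1 : ℤ) - (k : ℤ)) * Real.sqrt k * max (k : ℝ) (ν / (ν - 1)) := by
        gcongr
        exact le_max_right _ _
end

section
/- The determinant of the n×n Cauchy matrix C_{s,t} = (1/(s_i − t_j))_{i,j=0}^{n-1} equals ∏_{i<j}(s_j − s_i)(t_i − t_j) / ∏_{i,j}(s_i − t_j). -/
open Matrix Complex BigOperators Finset

/-!
Eliminating the first row and column with the pivot `1 / (s₀ - t₀)`, the Schur complement of a
Cauchy matrix is again a Cauchy matrix, on the remaining nodes, with row `i` scaled by
`(sᵢ - s₀) / (sᵢ - t₀)` and column `j` by `(t₀ - tⱼ) / (s₀ - tⱼ)`. This gives a one-step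
recursion for the determinant, and the product formula satisfies the same recursion.
-/

theorem Fin.prod_prod_Ioi_succ {M : Type*} [CommMonoid M] {n : ℕ}
    (f : Fin (n + 1) → Fin (n + 1) → M) :
    ∏ i, ∏ j ∈ Ioi i, f i j =
      (∏ j : Fin n, f 0 j.succ) * ∏ i : Fin n, ∏ j ∈ Ioi i, f i.succ j.succ := by
  simp only [Fin.prod_univ_succ, Fin.prod_Ioi_zero, Fin.prod_Ioi_succ]

namespace Matrix

variable {K : Type*} [Field K]

theorem det_of_mul_mul {n : Type*} [Fintype n] [DecidableEq n] (u v : n → K)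
    (M : Matrix n n K) :
    (of fun i j => u i * v j * M i j).det = (∏ i, u i) * (∏ j, v j) * M.det := by
  calc (of fun i j => u i * v j * M i j).det
      = (of fun i j => u i * (of fun i j => v j * M i j) i j).det := by
        simp only [of_apply, mul_assoc]
    _ = (∏ i, u i) * (∏ j, v j) * M.det := by rw [det_mul_column, det_mul_row, mul_assoc]

def schurComplementZero {n : ℕ} (A : Matrix (Fin (n + 1)) (Fin (n + 1)) K) :
    Matrix (Fin n) (Fin n) K :=
  of fun i j => A i.succ j.succ - A i.succ 0 / A 0 0 * A 0 j.succ

theorem det_succ_eq_mul_det_schurComplementZero {n : ℕ}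
    (A : Matrix (Fin (n + 1)) (Fin (n + 1)) K) (h : A 0 0 ≠ 0) :
    A.det = A 0 0 * A.schurComplementZero.det := by
  let c : Fin (n + 1) → K := Fin.cases 0 fun i => -(A i.succ 0 / A 0 0)
  let B : Matrix (Fin (n + 1)) (Fin (n + 1)) K := of fun i j => A i j + c i * A 0 j
  have hB : A.det = B.det :=
    det_eq_of_forall_row_eq_smul_add_const (-c) 0 (by simp [c]) fun i j => by simp [B, c]
  have hB_col : ∀ i : Fin n, B i.succ 0 = 0 := fun i => by simp [B, c, h]
  rw [hB, det_succ_column_zero, Fin.sum_univ_succ]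
  simp only [hB_col, mul_zero, zero_mul, sum_const_zero, add_zero]
  simp [B, c, schurComplementZero, submatrix, sub_eq_add_neg, neg_mul]

def cauchy {m n : Type*} (s : m → K) (t : n → K) : Matrix m n K :=
  of fun i j => 1 / (s i - t j)

theorem schurComplementZero_cauchy {n : ℕ} (s t : Fin (n + 1) → K) (hst : ∀ i j, s i ≠ t j) :
    (cauchy s t).schurComplementZero =
      of fun i j => (s i.succ - s 0) / (s i.succ - t 0) * ((t 0 - t j.succ) / (s 0 - t j.succ)) *
        cauchy (Fin.tail s) (Fin.tail t) i j := by
  have hst' i j : s i - t j ≠ 0 := sub_ne_zero.2 (hst i j)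
  ext i j
  simp only [schurComplementZero, cauchy, of_apply, Fin.tail]
  field_simp [hst']
  ring

theorem det_cauchy_succ {n : ℕ} (s t : Fin (n + 1) → K) (hst : ∀ i j, s i ≠ t j) :
    (cauchy s t).det = (s 0 - t 0)⁻¹ * (∏ i : Fin n, (s i.succ - s 0) / (s i.succ - t 0)) *
      (∏ j : Fin n, (t 0 - t j.succ) / (s 0 - t j.succ)) *
        (cauchy (Fin.tail s) (Fin.tail t)).det := by
  rw [det_succ_eq_mul_det_schurComplementZero _ (by simpa [cauchy] using sub_ne_zero.2 (hst 0 0)),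
    schurComplementZero_cauchy s t hst, det_of_mul_mul]
  simp only [cauchy, of_apply, one_div, mul_assoc]

theorem det_cauchy {n : ℕ} (s t : Fin n → K) (hst : ∀ i j, s i ≠ t j) :
    (cauchy s t).det =
      (∏ i, ∏ j ∈ Ioi i, (s j - s i) * (t i - t j)) / ∏ i, ∏ j, (s i - t j) := by
  induction n with
  | zero => simp
  | succ n ih =>
    rw [det_cauchy_succ s t hst, ih (Fin.tail s) (Fin.tail t) fun i j => hst i.succ j.succ,
      Fin.prod_prod_Ioi_succ]
    simp only [Fin.prod_univ_succ, prod_mul_distrib, Fin.tail, div_eq_mul_inv, mul_inv,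
      prod_inv_distrib]
    ring

end Matrix

theorem cauchy_det_general (n : ℕ) (s t : Fin n → ℂ)
    (hst : ∀ i j, s i ≠ t j) :
    (Matrix.of fun i j : Fin n => 1 / (s i - t j)).det =
      (∏ i : Fin n, ∏ j ∈ Finset.Ioi i, (s j - s i) * (t i - t j)) /
        ∏ i : Fin n, ∏ j : Fin n, (s i - t j) :=
  det_cauchy s t hst

/-- Cauchy determinant formula:
det C_{s,t} = ∏_{i<j}(s_j − s_i)(t_i − t_j) / ∏_{i,j}(s_i − t_j). -/
theorem cauchy_det (n : ℕ) (s t : Fin n → ℂ)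
    (hs : Function.Injective s) (ht : Function.Injective t)
    (hst : ∀ i j, s i ≠ t j) :
    (Matrix.of fun i j : Fin n => 1 / (s i - t j)).det =
      (∏ i : Fin n, ∏ j ∈ Finset.Ioi i, (s j - s i) * (t i - t j)) /
        ∏ i : Fin n, ∏ j : Fin n, (s i - t j) :=
  cauchy_det_general n s t hst
end

section
/- The Vandermonde–Cauchy factorization holds: V_s = D · C_{s,t} · D_1^{-1} · V_t, where D = diag(t(s_i))_{i=0}^{n-1}, D_1 = diag(t'(t_j))_{j=0}^{n-1}, and t(x) = ∏_{j}(x − t_j). -/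
open Matrix Complex BigOperators Finset

/-! A polynomial of degree `< n` is its own Lagrange interpolant on the `n` nodes `t j`; evaluating
the first barycentric form of that interpolant at `s i` for the monomial `X ^ k` is exactly entry
`(i, k)` of the factorization, whose middle factor is `diag` of the nodal weights
`1 / t'(t j)`. -/

open Polynomial Lagrange

theorem Lagrange.eval_eq_eval_nodal_mul_sum_nodalWeight {F ι : Type*} [Field F] [DecidableEq ι]
    {s : Finset ι} {v : ι → F} {f : F[X]} {x : F} (hvs : Set.InjOn v s) (hf : f.degree < #s)
    (hx : ∀ i ∈ s, x ≠ v i) :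
    f.eval x = (nodal s v).eval x * ∑ i ∈ s, nodalWeight s v i * (x - v i)⁻¹ * f.eval (v i) := by
  conv_lhs => rw [eq_interpolate hvs hf]
  exact eval_interpolate_not_at_node _ hx

theorem Matrix.inv_diagonal_of_ne_zero {F ι : Type*} [Field F] [Fintype ι] [DecidableEq ι]
    {d : ι → F} (hd : ∀ i, d i ≠ 0) : (diagonal d)⁻¹ = diagonal fun i => (d i)⁻¹ := by
  refine inv_eq_right_inv ?_
  rw [diagonal_mul_diagonal, ← diagonal_one]
  exact congrArg diagonal (funext fun i => mul_inv_cancel₀ (hd i))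

theorem Lagrange.diagonal_eval_derivative_nodal_inv {F ι : Type*} [Field F] [Fintype ι]
    [DecidableEq ι] {v : ι → F} (hv : Function.Injective v) :
    (diagonal fun i => (derivative (nodal univ v)).eval (v i))⁻¹ =
      diagonal (nodalWeight univ v) := by
  have hw (i : ι) : nodalWeight univ v i = ((derivative (nodal univ v)).eval (v i))⁻¹ :=
    nodalWeight_eq_eval_derivative_nodal (mem_univ i)
  have hd (i : ι) : (derivative (nodal univ v)).eval (v i) ≠ 0 :=
    fun h => nodalWeight_ne_zero hv.injOn (mem_univ i) (by rw [hw, h, _root_.inv_zero])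
  simp only [inv_diagonal_of_ne_zero hd, ← hw]

theorem Matrix.vandermonde_eq_diagonal_mul_cauchy_mul_diagonal_mul_vandermonde {F : Type*}
    [Field F] {n : ℕ} (s t : Fin n → F) (ht : Function.Injective t) (hst : ∀ i j, s i ≠ t j) :
    vandermonde s =
      diagonal (fun i => (nodal univ t).eval (s i)) * of (fun i j => (s i - t j)⁻¹) *
        diagonal (nodalWeight univ t) * vandermonde t := by
  ext i k
  have hk : (X ^ (k : ℕ) : F[X]).degree < #(univ : Finset (Fin n)) := by
    rw [degree_X_pow, card_univ, Fintype.card_fin]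
    exact_mod_cast k.isLt
  have hbary := eval_eq_eval_nodal_mul_sum_nodalWeight ht.injOn hk fun j _ => hst i j
  simp only [eval_pow, eval_X] at hbary
  rw [vandermonde_apply, hbary, mul_apply, mul_sum]
  simp only [mul_diagonal, diagonal_mul, vandermonde_apply, of_apply]
  exact sum_congr rfl fun j _ => by ring

/-- Vandermonde–Cauchy factorization: V_s = D·C_{s,t}·D₁⁻¹·V_t, where
D = diag(t(s_i)), D₁ = diag(t'(t_j)), t(x) = ∏_j (x − t_j). -/
theorem vandermonde_cauchy_factorization (n : ℕ) (s t : Fin n → ℂ)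
    (ht : Function.Injective t) (hst : ∀ i j, s i ≠ t j) :
    Matrix.vandermonde s =
      Matrix.diagonal (fun i : Fin n =>
          (∏ j : Fin n, (Polynomial.X - Polynomial.C (t j))).eval (s i)) *
        (Matrix.of fun i j : Fin n => 1 / (s i - t j)) *
        (Matrix.diagonal fun j : Fin n =>
          (Polynomial.derivative (∏ j : Fin n, (Polynomial.X - Polynomial.C (t j)))).eval
            (t j))⁻¹ *
        Matrix.vandermonde t := by
  simp only [← nodal_eq, one_div, diagonal_eval_derivative_nodal_inv ht]
  exact vandermonde_eq_diagonal_mul_cauchy_mul_diagonal_mul_vandermonde s t ht hst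
end

section
/- With t_j = f·ω_n^j for a complex f with |f| = 1 (so t(x) = x^n − f^n), the inverse of a nonsingular Vandermonde matrix satisfies V_s^{-1} = diag(f^{n−1−j})_j · Ω^H · diag(ω_n^{−j})_j · C_{s,f}^{-1} · diag(1/(s_i^n − f^n))_i, where C_{s,f} = (1/(s_i − fω_n^j))_{i,j} and Ω is the DFT matrix. -/
open Matrix Complex BigOperators Finset

/-! Every knot `t_j = f ω^j` satisfies `t_j^n = f^n`, so the geometric sum
`∑_k s^k t^(n-1-k) = (s^n - f^n) / (s - t)` factors the Cauchy matrix as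
`C_{s,f} = diag((s_i^n - f^n)⁻¹) · V_s · T` with `T = (t_j^(n-1-k))_{k,j}`. Since `ω^n = 1` and
`|ω| = 1`, `T = diag(f^(n-1-k)) · Ωᴴ · diag(ω^(-j))`, and both outer factors are invertible
(`f ≠ 0`, `Ω` is a Vandermonde matrix on distinct nodes), so inverting the factorization
solves for `V_s⁻¹`. -/

section CauchyVandermonde

variable {K : Type*} [Field K] {n : ℕ}

theorem one_div_sub_eq_sum_mul_pow {x t c : K} (ht : t ^ n = c) (hx : x ^ n ≠ c) :
    1 / (x - t) = ∑ k : Fin n, (x ^ n - c)⁻¹ * x ^ (k : ℕ) * t ^ (n - 1 - (k : ℕ)) := by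
  have hgeom : (∑ k : Fin n, x ^ (k : ℕ) * t ^ (n - 1 - (k : ℕ))) * (x - t) = x ^ n - c := by
    rw [Fin.sum_univ_eq_sum_range (fun k => x ^ k * t ^ (n - 1 - k)), geom_sum₂_mul, ht]
  have hsum : ∑ k : Fin n, x ^ (k : ℕ) * t ^ (n - 1 - (k : ℕ)) ≠ 0 :=
    left_ne_zero_of_mul (hgeom ▸ sub_ne_zero.mpr hx)
  simp_rw [mul_assoc, ← Finset.mul_sum, ← hgeom]
  field_simp

theorem cauchy_eq_diagonal_mul_vandermonde_mul (s t : Fin n → K) {c : K}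
    (ht : ∀ j, t j ^ n = c) (hs : ∀ i, s i ^ n ≠ c) :
    (of fun i j => 1 / (s i - t j)) =
      diagonal (fun i => (s i ^ n - c)⁻¹) * vandermonde s *
        of fun (k j : Fin n) => t j ^ (n - 1 - (k : ℕ)) := by
  ext i j
  rw [mul_apply]
  simp only [of_apply, diagonal_mul, vandermonde_apply]
  exact one_div_sub_eq_sum_mul_pow (ht j) (hs i)

end CauchyVandermonde

theorem Matrix.inv_eq_mul_inv_mul_of_eq_mul_mul {m α : Type*} [Fintype m] [DecidableEq m]
    [CommRing α] {C D V M : Matrix m m α} (hD : IsUnit D) (hM : IsUnit M) (h : C = D * V * M) :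
    V⁻¹ = M * C⁻¹ * D := by
  rw [h, mul_inv_rev, mul_inv_rev, ← Matrix.mul_assoc M,
    mul_nonsing_inv M ((isUnit_iff_isUnit_det M).mp hM), Matrix.one_mul, Matrix.mul_assoc,
    nonsing_inv_mul D ((isUnit_iff_isUnit_det D).mp hD), Matrix.mul_one]

section RootsOfUnity

variable {K : Type*} [Field K] {n : ℕ} {ω : K}

theorem IsPrimitiveRoot.isUnit_of_pow_mul (hω : IsPrimitiveRoot ω n) :
    IsUnit (of fun i j : Fin n => ω ^ ((i : ℕ) * (j : ℕ))) := by
  have hV : (of fun i j : Fin n => ω ^ ((i : ℕ) * (j : ℕ))) =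
      vandermonde fun i : Fin n => ω ^ (i : ℕ) := by
    ext i j
    simp only [of_apply, vandermonde_apply, pow_mul]
  rw [hV, isUnit_iff_isUnit_det, isUnit_iff_ne_zero, det_vandermonde_ne_zero_iff]
  exact fun a b hab => Fin.ext (hω.pow_inj a.2 b.2 hab)

theorem of_mul_pow_pow_eq_diagonal_mul_conjTranspose_mul [StarRing K] (f : K)
    (hω : ω ^ n = 1) (hstar : star ω = ω⁻¹) :
    (of fun (k j : Fin n) => (f * ω ^ (j : ℕ)) ^ (n - 1 - (k : ℕ))) =
      diagonal (fun k : Fin n => f ^ (n - 1 - (k : ℕ))) *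
        (of fun i j : Fin n => ω ^ ((i : ℕ) * (j : ℕ)))ᴴ *
        diagonal (fun j : Fin n => ω⁻¹ ^ (j : ℕ)) := by
  ext k j
  have hexp : (j : ℕ) * (n - 1 - k) + (j * k + j) = n * j := by
    have h : n - 1 - k + k + 1 = n := by omega
    calc (j : ℕ) * (n - 1 - k) + (j * k + j) = (n - 1 - k + k + 1) * j := by ring
      _ = n * j := by rw [h]
  have hroot : ω ^ ((j : ℕ) * (n - 1 - k)) = ω⁻¹ ^ ((j : ℕ) * k + j) := by
    rw [inv_pow]
    refine eq_inv_of_mul_eq_one_left ?_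
    rw [← pow_add, hexp, pow_mul, hω, one_pow]
  simp only [of_apply, mul_diagonal, diagonal_mul, conjTranspose_apply, star_pow, hstar]
  rw [mul_pow, ← pow_mul, hroot, pow_add]
  ring

end RootsOfUnity

theorem vandermonde_inverse_formula_general (n : ℕ) (hn : 0 < n) (s : Fin n → ℂ)
    (f : ℂ) (hf : ‖f‖ = 1)
    (ω : ℂ) (hω : ω = Complex.exp (2 * Real.pi * Complex.I / n))
    (hknots : ∀ i : Fin n, s i ^ n ≠ f ^ n) :
    (Matrix.vandermonde s)⁻¹ =
      Matrix.diagonal (fun j : Fin n => f ^ (n - 1 - (j : ℕ))) *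
        (Matrix.of fun i j : Fin n => ω ^ ((i : ℕ) * (j : ℕ)))ᴴ *
        Matrix.diagonal (fun j : Fin n => ω⁻¹ ^ (j : ℕ)) *
        (Matrix.of fun i j : Fin n => 1 / (s i - f * ω ^ (j : ℕ)))⁻¹ *
        Matrix.diagonal (fun i : Fin n => (s i ^ n - f ^ n)⁻¹) := by
  have hprim : IsPrimitiveRoot ω n := hω ▸ Complex.isPrimitiveRoot_exp n hn.ne'
  have hstar : star ω = ω⁻¹ := (Complex.inv_eq_conj (hprim.norm'_eq_one hn.ne')).symm
  have hf0 : f ≠ 0 := norm_ne_zero_iff.mp (hf ▸ one_ne_zero)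
  have hω0 : ω ≠ 0 := hprim.ne_zero hn.ne'
  have ht : ∀ j : Fin n, (f * ω ^ (j : ℕ)) ^ n = f ^ n := fun j => by
    rw [mul_pow, ← pow_mul, mul_comm (j : ℕ) n, pow_mul, hprim.pow_eq_one, one_pow, mul_one]
  have hD : IsUnit (diagonal fun i : Fin n => (s i ^ n - f ^ n)⁻¹) :=
    isUnit_diagonal.mpr <| Pi.isUnit_iff.mpr fun i =>
      (inv_ne_zero (sub_ne_zero.mpr (hknots i))).isUnit
  have hT : IsUnit (diagonal (fun j : Fin n => f ^ (n - 1 - (j : ℕ))) *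
      (of fun i j : Fin n => ω ^ ((i : ℕ) * (j : ℕ)))ᴴ * diagonal fun j : Fin n => ω⁻¹ ^ (j : ℕ)) :=
    ((isUnit_diagonal.mpr <| Pi.isUnit_iff.mpr fun k => (pow_ne_zero _ hf0).isUnit).mul
      ((isUnit_conjTranspose _).mpr hprim.isUnit_of_pow_mul)).mul
      (isUnit_diagonal.mpr <| Pi.isUnit_iff.mpr fun j => (pow_ne_zero _ (inv_ne_zero hω0)).isUnit)
  refine inv_eq_mul_inv_mul_of_eq_mul_mul hD hT ?_
  rw [← of_mul_pow_pow_eq_diagonal_mul_conjTranspose_mul f hprim.pow_eq_one hstar]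
  exact cauchy_eq_diagonal_mul_vandermonde_mul s (fun j => f * ω ^ (j : ℕ)) ht hknots

/-- Inversion formula for a Vandermonde matrix via the CV (Cauchy–Vandermonde)
matrix with knots t_j = f·ω_n^j, |f| = 1:
V_s⁻¹ = diag(f^{n−1−j})·Ωᴴ·diag(ω_n^{−j})·C_{s,f}⁻¹·diag(1/(s_i^n − f^n)). -/
theorem vandermonde_inverse_formula (n : ℕ) (hn : 0 < n) (s : Fin n → ℂ)
    (hdet : (Matrix.vandermonde s).det ≠ 0) (f : ℂ) (hf : ‖f‖ = 1)
    (ω : ℂ) (hω : ω = Complex.exp (2 * Real.pi * Complex.I / n))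
    (hknots : ∀ i : Fin n, s i ^ n ≠ f ^ n) :
    (Matrix.vandermonde s)⁻¹ =
      Matrix.diagonal (fun j : Fin n => f ^ (n - 1 - (j : ℕ))) *
        (Matrix.of fun i j : Fin n => ω ^ ((i : ℕ) * (j : ℕ)))ᴴ *
        Matrix.diagonal (fun j : Fin n => ω⁻¹ ^ (j : ℕ)) *
        (Matrix.of fun i j : Fin n => 1 / (s i - f * ω ^ (j : ℕ)))⁻¹ *
        Matrix.diagonal (fun i : Fin n => (s i ^ n - f ^ n)⁻¹) :=
  vandermonde_inverse_formula_general n hn s f hf ω hω hknots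
end
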